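/- A category of partitions C is finitely generated (i.e. C = ⟨p₁,…,pₙ⟩ for finitely many partitions p₁,…,pₙ) if and only if it is singly generated (i.e. C = ⟨p⟩ for a single partition p). Hence every category of partitions is either singly generated or not finitely generated. -/

import Mathlib

/-!
Basic combinatorics of categories of partitions (Banica–Speicher easy quantum groups).

A partition with `k` upper and `l` lower points is encoded as an equivalence
relation (a `Setoid`) on the set `Fin k ⊕ Fin l` of its points; its blocks are
the equivalence classes.
-/

namespace EasyQG

/-- A partition of `k` upper and `l` lower points into blocks. -/
abbrev Partition (k l : ℕ) : Type := Setoid (Fin k ⊕ Fin l)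

/-- The relation "lying in the same block" of a partition. -/
def inSameBlock {k l : ℕ} (p : Partition k l) :
    (Fin k ⊕ Fin l) → (Fin k ⊕ Fin l) → Prop :=
  @Setoid.r _ p

/-- The partition in `P(0,n)` associated to a word: two points lie in the same
block iff they carry the same letter. -/
def ofWord {n : ℕ} (w : Fin n → ℕ) : Partition 0 n :=
  Setoid.ker (Sum.elim Fin.elim0 w)

/-- The partition in `P(0,n)` associated to a word given as a list of letters. -/
def ofList (w : List ℕ) : Partition 0 w.length :=
  ofWord w.get

/-- The identity partition `|` in `P(1,1)`: one upper point joined to one lower point. -/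
def idPartition : Partition 1 1 := ⊤

/-- The pair partition `⊓` in `P(0,2)`: two points in one block. -/
def pairPartition : Partition 0 2 := ⊤

/-- The double singleton `↓⊗↓` in `P(0,2)`: two points in two different blocks. -/
def doubleSingleton : Partition 0 2 := ⊥

/-- The four block partition `⊓⊓` in `P(0,4)`: four points in one block (word `aaaa`). -/
def fourBlock : Partition 0 4 := ⊤

/-- The fat crossing partition in `P(4,4)`, with blocks `{1,2,3',4'}` and `{3,4,1',2'}`. -/
def fatCross : Partition 4 4 :=
  Setoid.ker (Sum.elim (fun i => decide (i.val < 2)) (fun j => decide (2 ≤ j.val)))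

/-- The pair positioner partition in `P(3,3)`, with blocks `{1,2,2',3'}` and `{3,1'}`. -/
def pairPositioner : Partition 3 3 :=
  Setoid.ker (Sum.elim (fun i => decide (i.val < 2)) (fun j => decide (1 ≤ j.val)))

/-- The `s`-mixing partition `h_s ∈ P(0,2s)`, the word `abab…ab` of length `2s`. -/
def sMixing (s : ℕ) : Partition 0 (2 * s) := ofWord (fun i => i.val % 2)

/-- The partition `π_k ∈ P(0,4k)`, the word `a₁…a_k a_k…a₁ a₁…a_k a_k…a₁`
in `k` distinct letters. -/
def piPartition (k : ℕ) : Partition 0 (4 * k) :=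
  ofWord (fun i =>
    if i.val % (2 * k) < k then i.val % (2 * k) else 2 * k - 1 - i.val % (2 * k))

/-- The disjoint sum of two set partitions. -/
def sumSetoid {α β : Type*} (ra : Setoid α) (rb : Setoid β) : Setoid (α ⊕ β) where
  r := Sum.LiftRel (@Setoid.r _ ra) (@Setoid.r _ rb)
  iseqv := by
    constructor
    · intro x
      cases x with
      | inl a => exact Sum.LiftRel.inl (ra.iseqv.refl a)
      | inr b => exact Sum.LiftRel.inr (rb.iseqv.refl b)
    · intro x y h
      cases h with
      | inl h => exact Sum.LiftRel.inl (ra.iseqv.symm h)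
      | inr h => exact Sum.LiftRel.inr (rb.iseqv.symm h)
    · intro x y z h1 h2
      cases h1 with
      | inl h1 => cases h2 with
        | inl h2 => exact Sum.LiftRel.inl (ra.iseqv.trans h1 h2)
      | inr h1 => cases h2 with
        | inr h2 => exact Sum.LiftRel.inr (rb.iseqv.trans h1 h2)

/-- Tensor product (horizontal concatenation) of partitions. -/
def tensor {k l k' l' : ℕ} (p : Partition k l) (q : Partition k' l') :
    Partition (k + k') (l + l') :=
  Setoid.comap
    (fun x => (Equiv.sumSumSumComm (Fin k) (Fin k') (Fin l) (Fin l'))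
      (Sum.map finSumFinEquiv.symm finSumFinEquiv.symm x))
    (sumSetoid p q)

/-- Composition (vertical concatenation) of partitions `p ∈ P(k,l)` and `q ∈ P(l,m)`:
blocks are joined along the `l` middle points, which are then deleted. -/
def comp {k l m : ℕ} (p : Partition k l) (q : Partition l m) : Partition k m :=
  Setoid.comap (Sum.map id Sum.inr)
    (Relation.EqvGen.setoid (fun x y : Fin k ⊕ (Fin l ⊕ Fin m) =>
      (∃ a b, inSameBlock p a b ∧ Sum.map id Sum.inl a = x ∧ Sum.map id Sum.inl b = y) ∨
      (∃ a b, inSameBlock q a b ∧ Sum.inr a = x ∧ Sum.inr b = y)))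

/-- Involution (turning a partition upside down). -/
def involution {k l : ℕ} (p : Partition k l) : Partition l k :=
  Setoid.comap Sum.swap p

/-- Rotation moving the leftmost upper point to the left end of the lower row. -/
def rotUL {k l : ℕ} (p : Partition (k + 1) l) : Partition k (l + 1) :=
  Setoid.comap
    (Sum.elim (fun i => Sum.inl i.succ)
      (fun j => Fin.cases (Sum.inl (0 : Fin (k + 1))) (fun j' => Sum.inr j') j)) p

/-- Rotation moving the leftmost lower point to the left end of the upper row. -/
def rotLU {k l : ℕ} (p : Partition k (l + 1)) : Partition (k + 1) l :=
  Setoid.comap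
    (Sum.elim (fun i => Fin.cases (Sum.inr (0 : Fin (l + 1))) (fun i' => Sum.inl i') i)
      (fun j => Sum.inr j.succ)) p

/-- Rotation moving the rightmost upper point to the right end of the lower row. -/
def rotUR {k l : ℕ} (p : Partition (k + 1) l) : Partition k (l + 1) :=
  Setoid.comap
    (Sum.elim (fun i => Sum.inl i.castSucc)
      (fun j => Fin.lastCases (Sum.inl (Fin.last k)) (fun j' => Sum.inr j') j)) p

/-- Rotation moving the rightmost lower point to the right end of the upper row. -/
def rotRU {k l : ℕ} (p : Partition k (l + 1)) : Partition (k + 1) l :=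
  Setoid.comap
    (Sum.elim (fun i => Fin.lastCases (Sum.inr (Fin.last l)) (fun i' => Sum.inl i') i)
      (fun j => Sum.inr j.castSucc)) p

/-- A category of partitions: a collection of partitions containing the identity
partition and closed under the category operations (tensor product, composition,
involution and the four rotations). -/
structure PartitionCategory where
  mem : Set (Σ k l : ℕ, Partition k l)
  id_mem : ⟨1, 1, idPartition⟩ ∈ mem
  tensor_mem : ∀ {k l k' l' : ℕ} {p : Partition k l} {q : Partition k' l'},
    ⟨k, l, p⟩ ∈ mem → ⟨k', l', q⟩ ∈ mem → ⟨k + k', l + l', tensor p q⟩ ∈ mem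
  comp_mem : ∀ {k l m : ℕ} {p : Partition k l} {q : Partition l m},
    ⟨k, l, p⟩ ∈ mem → ⟨l, m, q⟩ ∈ mem → ⟨k, m, comp p q⟩ ∈ mem
  involution_mem : ∀ {k l : ℕ} {p : Partition k l},
    ⟨k, l, p⟩ ∈ mem → ⟨l, k, involution p⟩ ∈ mem
  rotUL_mem : ∀ {k l : ℕ} {p : Partition (k + 1) l},
    ⟨k + 1, l, p⟩ ∈ mem → ⟨k, l + 1, rotUL p⟩ ∈ mem
  rotLU_mem : ∀ {k l : ℕ} {p : Partition k (l + 1)},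
    ⟨k, l + 1, p⟩ ∈ mem → ⟨k + 1, l, rotLU p⟩ ∈ mem
  rotUR_mem : ∀ {k l : ℕ} {p : Partition (k + 1) l},
    ⟨k + 1, l, p⟩ ∈ mem → ⟨k, l + 1, rotUR p⟩ ∈ mem
  rotRU_mem : ∀ {k l : ℕ} {p : Partition k (l + 1)},
    ⟨k, l + 1, p⟩ ∈ mem → ⟨k + 1, l, rotRU p⟩ ∈ mem

/-- The members of the smallest category of partitions containing `S`
(the category `⟨S⟩` generated by `S`). -/
def generated (S : Set (Σ k l : ℕ, Partition k l)) : Set (Σ k l : ℕ, Partition k l) :=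
  {x | ∀ C : PartitionCategory, S ⊆ C.mem → x ∈ C.mem}

/-- A category of partitions is hyperoctahedral if it contains the four block
partition `⊓⊓` but not the double singleton `↓⊗↓`. -/
def Hyperoctahedral (C : PartitionCategory) : Prop :=
  (⟨0, 4, fourBlock⟩ : Σ k l : ℕ, Partition k l) ∈ C.mem ∧
    (⟨0, 2, doubleSingleton⟩ : Σ k l : ℕ, Partition k l) ∉ C.mem

/-- A category of partitions is group-theoretical if it contains the pair
positioner partition. -/
def GroupTheoretical (C : PartitionCategory) : Prop :=
  (⟨3, 3, pairPositioner⟩ : Σ k l : ℕ, Partition k l) ∈ C.mem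

/-- The generating set `{π_l | 1 ≤ l ≤ k}`. -/
def piUpTo (k : ℕ) : Set (Σ k l : ℕ, Partition k l) :=
  {x | ∃ l : ℕ, 1 ≤ l ∧ l ≤ k ∧ x = ⟨0, 4 * l, piPartition l⟩}

/-- The generating set `{π_l | l ∈ ℕ, l ≥ 1}`. -/
def piAll : Set (Σ k l : ℕ, Partition k l) :=
  {x | ∃ l : ℕ, 1 ≤ l ∧ x = ⟨0, 4 * l, piPartition l⟩}

end EasyQG
namespace EasyQG

/-- Merging the blocks of the points `x` and `y` of a partition. -/
def merge {k l : ℕ} (p : Partition k l) (x y : Fin k ⊕ Fin l) : Partition k l :=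
  Relation.EqvGen.setoid (fun u v => inSameBlock p u v ∨ (u = x ∧ v = y) ∨ (u = y ∧ v = x))

/-- The word `a_{i(1)}^{k(1)} … a_{i(m)}^{k(m)}` determined by a list of
letters with exponents. -/
def expand (blocks : List (ℕ × ℕ)) : List ℕ :=
  (blocks.map fun be => List.replicate be.2 be.1).flatten

/-- The run decomposition of a word: the list of its (letter, exponent) blocks. -/
def runs : List ℕ → List (ℕ × ℕ)
  | [] => []
  | a :: rest =>
    match runs rest with
    | [] => [(a, 1)]
    | (b, e) :: rs => if a = b then (b, e + 1) :: rs else (a, 1) :: (b, e) :: rs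

/-- The single-double leg form associated to a word: every odd exponent is
replaced by `1` and every even exponent by `2`. -/
def sdForm (w : List ℕ) : List ℕ :=
  expand ((runs w).map fun be => (be.1, if Odd be.2 then 1 else 2))

/-- A word is in single-double leg form if all its exponents are `1` or `2`. -/
def IsSingleDoubleLegForm (w : List ℕ) : Prop :=
  ∃ blocks : List (ℕ × ℕ), List.Chain' (fun x y => x.1 ≠ y.1) blocks ∧
    (∀ b ∈ blocks, b.2 = 1 ∨ b.2 = 2) ∧ w = expand blocks

/-- The vertical reflection of a partition: the left-to-right order of the
points is reversed in both rows, keeping the block structure. -/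
def verticalReflect {k l : ℕ} (p : Partition k l) : Partition k l :=
  Setoid.comap (Sum.map Fin.rev Fin.rev) p

/-- `leg [a₁,…,a_k] [X₁,…,X_{k-1}] = a₁ X₁ a₂ X₂ … a_{k-1} X_{k-1} a_k`:
a list of letters interleaved with filler words. -/
def leg : List ℕ → List (List ℕ) → List ℕ
  | [], _ => []
  | [a], _ => [a]
  | a :: rest, Xs => a :: (Xs.headD [] ++ leg rest Xs.tail)

/-- A word contains a W of depth `k` if it can be written as
`Y₁ S_α X_k^α S_β Y₂ S_γ X_k^γ S_δ Y₃`, where `S_α = a₁X₁^α a₂X₂^α…a_k`,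
`S_β = a_k X_{k-1}^β…X₁^β a₁`, `S_γ = a₁X₁^γ…a_k`, `S_δ = a_k X_{k-1}^δ…X₁^δ a₁`
for `k` distinct letters `a₁,…,a_k`, each of which occurs an odd number of
times in each of `S_α`, `S_β`, `S_γ`, `S_δ`. -/
def ContainsW (w : List ℕ) (k : ℕ) : Prop :=
  ∃ (as : List ℕ) (Xa Xb Xc Xd : List (List ℕ)) (Xka Xkc Y1 Y2 Y3 : List ℕ),
    as.length = k ∧ as.Nodup ∧
    Xa.length = k - 1 ∧ Xb.length = k - 1 ∧ Xc.length = k - 1 ∧ Xd.length = k - 1 ∧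
    w = Y1 ++ leg as Xa ++ Xka ++ leg as.reverse Xb ++ Y2 ++
        leg as Xc ++ Xkc ++ leg as.reverse Xd ++ Y3 ∧
    ∀ a ∈ as, Odd ((leg as Xa).count a) ∧ Odd ((leg as.reverse Xb).count a) ∧
      Odd ((leg as Xc).count a) ∧ Odd ((leg as.reverse Xd).count a)

/-- `wdepth w` is the maximal `k` such that some rotated version of the
word `w` contains a W of depth `k`. -/
noncomputable def wdepth (w : List ℕ) : ℕ :=
  sSup {k | ∃ r : ℕ, ContainsW (w.rotate r) k}

end EasyQG
namespace EasyQG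

/-! ### Basic lemmas about `generated` -/

/-- `generated S` is itself (the member set of) a category of partitions. -/
def genCat (S : Set (Σ k l : ℕ, Partition k l)) : PartitionCategory where
  mem := generated S
  id_mem := fun C _ => C.id_mem
  tensor_mem := fun hp hq C hS => C.tensor_mem (hp C hS) (hq C hS)
  comp_mem := fun hp hq C hS => C.comp_mem (hp C hS) (hq C hS)
  involution_mem := fun hp C hS => C.involution_mem (hp C hS)
  rotUL_mem := fun hp C hS => C.rotUL_mem (hp C hS)
  rotLU_mem := fun hp C hS => C.rotLU_mem (hp C hS)
  rotUR_mem := fun hp C hS => C.rotUR_mem (hp C hS)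
  rotRU_mem := fun hp C hS => C.rotRU_mem (hp C hS)

lemma subset_generated (S : Set (Σ k l : ℕ, Partition k l)) : S ⊆ generated S :=
  fun _ hx _ hS => hS hx

lemma generated_minimal {S : Set (Σ k l : ℕ, Partition k l)} {C : PartitionCategory}
    (h : S ⊆ C.mem) : generated S ⊆ C.mem := fun _ hx => hx C h

lemma generated_antisymm {S T : Set (Σ k l : ℕ, Partition k l)}
    (h1 : S ⊆ generated T) (h2 : T ⊆ generated S) : generated S = generated T :=
  Set.Subset.antisymm (generated_minimal (C := genCat T) h1)
    (generated_minimal (C := genCat S) h2)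

/-! ### Casting partitions along equalities of the numbers of points -/

/-- Transport a partition along equalities of the numbers of points. -/
def pcast {k l k' l' : ℕ} (hk : k = k') (hl : l = l') (p : Partition k l) : Partition k' l' :=
  Setoid.comap (Sum.map (finCongr hk.symm) (finCongr hl.symm)) p

lemma pcast_rfl {k l : ℕ} (p : Partition k l) : pcast rfl rfl p = p := by
  apply Setoid.ext
  intro x y
  show p (Sum.map _ _ x) (Sum.map _ _ y) ↔ p x y
  have : ∀ z : Fin k ⊕ Fin l, Sum.map (finCongr rfl) (finCongr rfl) z = z := by
    intro z; cases z <;> rfl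
  rw [this, this]

lemma mem_cast_iff {C : PartitionCategory} {k l k' l' : ℕ} (hk : k = k') (hl : l = l')
    (p : Partition k l) :
    (⟨k, l, p⟩ : Σ k l : ℕ, Partition k l) ∈ C.mem ↔
      (⟨k', l', pcast hk hl p⟩ : Σ k l : ℕ, Partition k l) ∈ C.mem := by
  subst hk; subst hl; rw [pcast_rfl]

end EasyQG
namespace EasyQG

/-! ### Small partitions present in every category -/

lemma rotUR_idPartition : rotUR idPartition = pairPartition := by
  apply Setoid.ext; intro x y
  constructor <;> intro _ <;> trivial

lemma pair_mem (C : PartitionCategory) :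
    (⟨0, 2, pairPartition⟩ : Σ k l : ℕ, Partition k l) ∈ C.mem := by
  have := C.rotUR_mem (k := 0) (l := 1) C.id_mem
  rwa [rotUR_idPartition] at this

lemma partition_zero_zero_eq (u v : Partition 0 0) : u = v := by
  apply Setoid.ext; intro x y
  rcases x with x | x <;> exact x.elim0

lemma partition_zero_one_eq (u v : Partition 0 1) : u = v := by
  apply Setoid.ext; intro x y
  rcases x with x | x
  · exact x.elim0
  rcases y with y | y
  · exact y.elim0
  have hx : x = y := Subsingleton.elim x y
  subst hx
  exact iff_of_true (u.refl _) (v.refl _)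

lemma empty_mem (C : PartitionCategory) (w : Partition 0 0) :
    (⟨0, 0, w⟩ : Σ k l : ℕ, Partition k l) ∈ C.mem := by
  have := C.comp_mem (pair_mem C) (C.involution_mem (pair_mem C))
  rwa [partition_zero_zero_eq w (comp pairPartition (involution pairPartition))]

/-- The identity partition on `n` strands. -/
def idN (n : ℕ) : Partition n n := Setoid.ker (Sum.elim Fin.val Fin.val)

lemma idN_one : idN 1 = idPartition := by
  apply Setoid.ext; intro x y
  constructor
  · intro _; trivial
  · intro _
    show Sum.elim Fin.val Fin.val x = Sum.elim Fin.val Fin.val y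
    rcases x with x | x <;> rcases y with y | y <;>
      simp [Fin.val_eq_zero x, Fin.val_eq_zero y]

end EasyQG
namespace EasyQG

/-! ### `finSumFinEquiv.symm` case analysis -/

lemma symm_spec {n m : ℕ} (i : Fin (n + m)) :
    (∃ h : i.val < n, finSumFinEquiv.symm i = Sum.inl ⟨i.val, h⟩) ∨
      (∃ b : Fin m, i.val = n + b.val ∧ finSumFinEquiv.symm i = Sum.inr b) := by
  rcases lt_or_ge i.val n with h | h
  · left
    refine ⟨h, ?_⟩
    rw [Equiv.symm_apply_eq]
    show i = Fin.castAdd m ⟨i.val, h⟩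
    ext; rfl
  · right
    have hb : i.val - n < m := by omega
    refine ⟨⟨i.val - n, hb⟩, by simp; omega, ?_⟩
    rw [Equiv.symm_apply_eq]
    show i = Fin.natAdd n ⟨i.val - n, hb⟩
    ext
    show i.val = n + (i.val - n)
    omega

lemma symm_castAdd {n m : ℕ} (i : Fin n) :
    finSumFinEquiv.symm (Fin.castAdd m i) = Sum.inl i := by
  rw [Equiv.symm_apply_eq]; rfl

lemma symm_natAdd {n m : ℕ} (i : Fin m) :
    finSumFinEquiv.symm (Fin.natAdd n i) = Sum.inr i := by
  rw [Equiv.symm_apply_eq]; rfl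

/-! ### Tensor products of kernels -/

lemma sumSetoid_ker {α β γ δ : Type*} (f : α → γ) (g : β → δ) :
    sumSetoid (Setoid.ker f) (Setoid.ker g) = Setoid.ker (Sum.map f g) := by
  apply Setoid.ext; intro x y
  show Sum.LiftRel _ _ x y ↔ Sum.map f g x = Sum.map f g y
  constructor
  · rintro (h | h) <;> simp_all [Setoid.ker]
  · rcases x with x | x <;> rcases y with y | y <;> intro h <;> simp_all

lemma tensor_ker {k l k' l' : ℕ} {γ δ : Type*} (f : Fin k ⊕ Fin l → γ)
    (g : Fin k' ⊕ Fin l' → δ) :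
    tensor (Setoid.ker f) (Setoid.ker g) =
      Setoid.ker (fun x => Sum.map f g
        ((Equiv.sumSumSumComm (Fin k) (Fin k') (Fin l) (Fin l'))
          (Sum.map finSumFinEquiv.symm finSumFinEquiv.symm x))) := by
  rw [tensor, sumSetoid_ker]
  rfl

end EasyQG
namespace EasyQG

lemma idN_succ (n : ℕ) : tensor (idN n) (idN 1) = idN (n + 1) := by
  rw [idN, idN, tensor_ker]
  apply Setoid.ext
  intro x y
  simp only [idN, Setoid.ker_def]
  change _ ↔ Sum.elim Fin.val Fin.val x = Sum.elim Fin.val Fin.val y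
  have key : ∀ x : Fin (n + 1) ⊕ Fin (n + 1),
      (∃ v, v < n ∧
        Sum.map (Sum.elim Fin.val Fin.val) (Sum.elim Fin.val Fin.val)
          ((Equiv.sumSumSumComm (Fin n) (Fin 1) (Fin n) (Fin 1))
            (Sum.map finSumFinEquiv.symm finSumFinEquiv.symm x)) = Sum.inl v ∧
          Sum.elim Fin.val Fin.val x = v) ∨
      (Sum.map (Sum.elim Fin.val Fin.val) (Sum.elim Fin.val Fin.val)
          ((Equiv.sumSumSumComm (Fin n) (Fin 1) (Fin n) (Fin 1))
            (Sum.map finSumFinEquiv.symm finSumFinEquiv.symm x)) = Sum.inr 0 ∧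
          Sum.elim Fin.val Fin.val x = n) := by
    intro z
    rcases z with i | i <;>
    · rcases symm_spec (n := n) (m := 1) i with ⟨h, hs⟩ | ⟨b, hb, hs⟩
      · exact Or.inl ⟨i.val, h, by simp [hs], rfl⟩
      · refine Or.inr ⟨by simp [hs], by simp; omega⟩
  rcases key x with ⟨v, hv, hx, hvx⟩ | ⟨hx, hvx⟩ <;>
    rcases key y with ⟨w, hw, hy, hwy⟩ | ⟨hy, hwy⟩ <;>
      rw [hx, hy, hvx, hwy] <;> (simp; try omega)

lemma idN_mem (C : PartitionCategory) (n : ℕ) :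
    (⟨n, n, idN n⟩ : Σ k l : ℕ, Partition k l) ∈ C.mem := by
  induction n with
  | zero =>
    have := empty_mem C (idN 0)
    exact this
  | succ n ih =>
    have h1 : (⟨1, 1, idN 1⟩ : Σ k l : ℕ, Partition k l) ∈ C.mem := by
      rw [idN_one]; exact C.id_mem
    have := C.tensor_mem ih h1
    rwa [idN_succ] at this

end EasyQG
namespace EasyQG

lemma tensor_rel {k l k' l' : ℕ} (p : Partition k l) (q : Partition k' l')
    (x y : Fin (k + k') ⊕ Fin (l + l')) :
    (tensor p q) x y ↔ Sum.LiftRel (⇑p) (⇑q)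
      ((Equiv.sumSumSumComm (Fin k) (Fin k') (Fin l) (Fin l'))
        (Sum.map finSumFinEquiv.symm finSumFinEquiv.symm x))
      ((Equiv.sumSumSumComm (Fin k) (Fin k') (Fin l) (Fin l'))
        (Sum.map finSumFinEquiv.symm finSumFinEquiv.symm y)) := Iff.rfl

/-- The colour of a point in the composition diagram for killing the right factor. -/
def col1 (n m : ℕ) : Fin 0 ⊕ (Fin (n + m) ⊕ Fin n) → Fin n ⊕ Fin m :=
  Sum.elim Fin.elim0 (Sum.elim (fun i => finSumFinEquiv.symm i) (fun j => Sum.inl j))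

/-- The bounding equivalence relation for killing the right factor. -/
def S1 {n m : ℕ} (p : Partition 0 n)
    (u v : Fin 0 ⊕ (Fin (n + m) ⊕ Fin n)) : Prop :=
  (∃ a b, col1 n m u = Sum.inl a ∧ col1 n m v = Sum.inl b ∧ p (Sum.inr a) (Sum.inr b)) ∨
    ((∃ a, col1 n m u = Sum.inr a) ∧ (∃ b, col1 n m v = Sum.inr b))

lemma S1_equiv {n m : ℕ} (p : Partition 0 n) : Equivalence (S1 (m := m) p) := by
  constructor
  · intro u
    rcases h : col1 n m u with a | a
    · exact Or.inl ⟨a, a, h, h, p.refl _⟩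
    · exact Or.inr ⟨⟨a, h⟩, ⟨a, h⟩⟩
  · rintro u v (⟨a, b, h1, h2, h3⟩ | ⟨h1, h2⟩)
    · exact Or.inl ⟨b, a, h2, h1, p.symm h3⟩
    · exact Or.inr ⟨h2, h1⟩
  · rintro u v w (⟨a, b, h1, h2, h3⟩ | ⟨h1, h2⟩) (⟨a', b', h1', h2', h3'⟩ | ⟨h1', h2'⟩)
    · rw [h1'] at h2
      cases Sum.inl.inj h2
      exact Or.inl ⟨a, b', h1, h2', p.trans h3 h3'⟩
    · rcases h1' with ⟨a', h1'⟩
      rw [h1'] at h2; cases h2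
    · rcases h2 with ⟨b, h2⟩
      rw [h1'] at h2; cases h2
    · exact Or.inr ⟨h1, h2'⟩

end EasyQG
namespace EasyQG

lemma inSameBlock_def {k l : ℕ} (p : Partition k l) (a b : Fin k ⊕ Fin l) :
    inSameBlock p a b ↔ p a b := Iff.rfl

lemma E1 {n m : ℕ} (p : Partition 0 n) (q : Partition 0 m) (z : Partition m 0) :
    comp (tensor p q) (tensor (idN n) z) = p := by
  apply Setoid.ext
  rintro (x | i) y
  · exact x.elim0
  rcases y with y | j
  · exact y.elim0
  show Relation.EqvGen
      (fun x y => (∃ a b, inSameBlock (tensor p q) a b ∧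
          Sum.map id Sum.inl a = x ∧ Sum.map id Sum.inl b = y) ∨
        (∃ a b, inSameBlock (tensor (idN n) z) a b ∧ Sum.inr a = x ∧ Sum.inr b = y))
      (Sum.inr (Sum.inr i)) (Sum.inr (Sum.inr j)) ↔ p (Sum.inr i) (Sum.inr j)
  constructor
  · intro h
    have hRS : ∀ u v, ((∃ a b, inSameBlock (tensor p q) a b ∧
          Sum.map id Sum.inl a = u ∧ Sum.map id Sum.inl b = v) ∨
        (∃ a b, inSameBlock (tensor (idN n) z) a b ∧ Sum.inr a = u ∧ Sum.inr b = v)) →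
        S1 (m := m) p u v := by
      rintro u v (⟨a, b, hab, rfl, rfl⟩ | ⟨a, b, hab, rfl, rfl⟩)
      · rcases a with a | ia
        · exact a.elim0
        rcases b with b | ib
        · exact b.elim0
        rw [inSameBlock_def, tensor_rel] at hab
        rcases symm_spec (n := n) (m := m) ia with ⟨h1, hs1⟩ | ⟨b1, hb1, hs1⟩ <;>
          rcases symm_spec (n := n) (m := m) ib with ⟨h2, hs2⟩ | ⟨b2, hb2, hs2⟩ <;>
            simp only [Sum.map_inr, hs1, hs2] at hab <;>
              simp [Equiv.sumSumSumComm] at hab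
        · exact Or.inl ⟨⟨ia.val, h1⟩, ⟨ib.val, h2⟩,
            by simp [col1, hs1], by simp [col1, hs2], hab⟩
        · exact Or.inr ⟨⟨b1, by simp [col1, hs1]⟩, ⟨b2, by simp [col1, hs2]⟩⟩
      · rw [inSameBlock_def, tensor_rel] at hab
        rcases a with ia | ja <;> rcases b with ib | jb
        · -- middle-middle
          rcases symm_spec (n := n) (m := m) ia with ⟨h1, hs1⟩ | ⟨b1, hb1, hs1⟩ <;>
            rcases symm_spec (n := n) (m := m) ib with ⟨h2, hs2⟩ | ⟨b2, hb2, hs2⟩ <;>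
              simp only [Sum.map_inl, hs1, hs2] at hab <;>
                simp [Equiv.sumSumSumComm, idN, Setoid.ker_def] at hab
          · refine Or.inl ⟨⟨ia.val, h1⟩, ⟨ib.val, h2⟩,
              by simp [col1, hs1], by simp [col1, hs2], ?_⟩
            have : (⟨ia.val, h1⟩ : Fin n) = ⟨ib.val, h2⟩ := by ext; exact hab
            rw [this]
          · exact Or.inr ⟨⟨b1, by simp [col1, hs1]⟩, ⟨b2, by simp [col1, hs2]⟩⟩
        · -- middle-bottom
          rcases symm_spec (n := n) (m := 0) jb with ⟨h2, hs2⟩ | ⟨b2, hb2, hs2⟩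
          swap
          · exact b2.elim0
          rcases symm_spec (n := n) (m := m) ia with ⟨h1, hs1⟩ | ⟨b1, hb1, hs1⟩ <;>
            simp only [Sum.map_inl, Sum.map_inr, hs1, hs2] at hab <;>
              simp [Equiv.sumSumSumComm, idN, Setoid.ker_def] at hab
          refine Or.inl ⟨⟨ia.val, h1⟩, jb, by simp [col1, hs1], by simp [col1], ?_⟩
          have : (⟨ia.val, h1⟩ : Fin n) = jb := by ext; exact hab
          rw [this]
        · -- bottom-middle
          rcases symm_spec (n := n) (m := 0) ja with ⟨h1, hs1⟩ | ⟨b1, hb1, hs1⟩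
          swap
          · exact b1.elim0
          rcases symm_spec (n := n) (m := m) ib with ⟨h2, hs2⟩ | ⟨b2, hb2, hs2⟩ <;>
            simp only [Sum.map_inl, Sum.map_inr, hs1, hs2] at hab <;>
              simp [Equiv.sumSumSumComm, idN, Setoid.ker_def] at hab
          refine Or.inl ⟨ja, ⟨ib.val, h2⟩, by simp [col1], by simp [col1, hs2], ?_⟩
          have : ja = (⟨ib.val, h2⟩ : Fin n) := by ext; exact hab
          rw [this]
        · -- bottom-bottom
          rcases symm_spec (n := n) (m := 0) ja with ⟨h1, hs1⟩ | ⟨b1, hb1, hs1⟩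
          swap
          · exact b1.elim0
          rcases symm_spec (n := n) (m := 0) jb with ⟨h2, hs2⟩ | ⟨b2, hb2, hs2⟩
          swap
          · exact b2.elim0
          simp only [Sum.map_inr, hs1, hs2] at hab
          simp [Equiv.sumSumSumComm, idN, Setoid.ker_def] at hab
          refine Or.inl ⟨ja, jb, by simp [col1], by simp [col1], ?_⟩
          have : ja = jb := by ext; exact hab
          rw [this]
    have hS := ((S1_equiv (m := m) p).eqvGen_iff).mp (Relation.EqvGen.mono hRS _ _ h)
    rcases hS with ⟨a, b, h1, h2, h3⟩ | ⟨⟨a, h1⟩, -⟩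
    · have ha : (Sum.inl i : Fin n ⊕ Fin m) = Sum.inl a := h1
      have hb : (Sum.inl j : Fin n ⊕ Fin m) = Sum.inl b := h2
      cases Sum.inl.inj ha
      cases Sum.inl.inj hb
      exact h3
    · exact absurd h1 (by simp [col1])
  · intro hp
    rcases symm_spec (n := n) (m := 0) i with ⟨h1, hs1⟩ | ⟨b1, _, _⟩
    swap
    · exact b1.elim0
    rcases symm_spec (n := n) (m := 0) j with ⟨h2, hs2⟩ | ⟨b2, _, _⟩
    swap
    · exact b2.elim0
    have step1 : (tensor (idN n) z) (Sum.inl (Fin.castAdd m i)) (Sum.inr i) := by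
      rw [tensor_rel]
      simp only [Sum.map_inl, Sum.map_inr, symm_castAdd, hs1]
      simp [Equiv.sumSumSumComm, idN, Setoid.ker_def]
      rfl
    have step2 : (tensor (idN n) z) (Sum.inl (Fin.castAdd m j)) (Sum.inr j) := by
      rw [tensor_rel]
      simp only [Sum.map_inl, Sum.map_inr, symm_castAdd, hs2]
      simp [Equiv.sumSumSumComm, idN, Setoid.ker_def]
      rfl
    have step3 : (tensor p q) (Sum.inr (Fin.castAdd m i)) (Sum.inr (Fin.castAdd m j)) := by
      rw [tensor_rel]
      simp only [Sum.map_inr, symm_castAdd]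
      simp [Equiv.sumSumSumComm]
      exact hp
    refine Relation.EqvGen.trans _ _ _
      (Relation.EqvGen.symm _ _ (Relation.EqvGen.rel _ _ (Or.inr
        ⟨Sum.inl (Fin.castAdd m i), Sum.inr i, step1, rfl, rfl⟩)))
      (Relation.EqvGen.trans _ _ _
        (Relation.EqvGen.rel _ _ (Or.inl
          ⟨Sum.inr (Fin.castAdd m i), Sum.inr (Fin.castAdd m j), step3, rfl, rfl⟩))
        (Relation.EqvGen.rel _ _ (Or.inr
          ⟨Sum.inl (Fin.castAdd m j), Sum.inr j, step2, rfl, rfl⟩)))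

end EasyQG
namespace EasyQG

/-- The colour of a point in the composition diagram for killing the left factor. -/
def col2 (n m : ℕ) : Fin 0 ⊕ (Fin (n + m) ⊕ Fin (0 + m)) → Fin n ⊕ Fin m :=
  Sum.elim Fin.elim0 (Sum.elim (fun i => finSumFinEquiv.symm i)
    (fun j => Sum.inr (Fin.cast (Nat.zero_add m) j)))

/-- The bounding equivalence relation for killing the left factor. -/
def S2 {n m : ℕ} (q : Partition 0 m)
    (u v : Fin 0 ⊕ (Fin (n + m) ⊕ Fin (0 + m))) : Prop :=
  (∃ a b, col2 n m u = Sum.inr a ∧ col2 n m v = Sum.inr b ∧ q (Sum.inr a) (Sum.inr b)) ∨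
    ((∃ a, col2 n m u = Sum.inl a) ∧ (∃ b, col2 n m v = Sum.inl b))

lemma S2_equiv {n m : ℕ} (q : Partition 0 m) : Equivalence (S2 (n := n) q) := by
  constructor
  · intro u
    rcases h : col2 n m u with a | a
    · exact Or.inr ⟨⟨a, h⟩, ⟨a, h⟩⟩
    · exact Or.inl ⟨a, a, h, h, q.refl _⟩
  · rintro u v (⟨a, b, h1, h2, h3⟩ | ⟨h1, h2⟩)
    · exact Or.inl ⟨b, a, h2, h1, q.symm h3⟩
    · exact Or.inr ⟨h2, h1⟩
  · rintro u v w (⟨a, b, h1, h2, h3⟩ | ⟨h1, h2⟩) (⟨a', b', h1', h2', h3'⟩ | ⟨h1', h2'⟩)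
    · rw [h1'] at h2
      cases Sum.inr.inj h2
      exact Or.inl ⟨a, b', h1, h2', q.trans h3 h3'⟩
    · rcases h1' with ⟨a', h1'⟩
      rw [h1'] at h2; cases h2
    · rcases h2 with ⟨b, h2⟩
      rw [h1'] at h2; cases h2
    · exact Or.inr ⟨h1, h2'⟩

lemma E2 {n m : ℕ} (p : Partition 0 n) (q : Partition 0 m) (z : Partition n 0) :
    comp (tensor p q) (tensor z (idN m)) = pcast rfl (Nat.zero_add m).symm q := by
  apply Setoid.ext
  rintro (x | i) y
  · exact x.elim0
  rcases y with y | j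
  · exact y.elim0
  show Relation.EqvGen
      (fun x y => (∃ a b, inSameBlock (tensor p q) a b ∧
          Sum.map id Sum.inl a = x ∧ Sum.map id Sum.inl b = y) ∨
        (∃ a b, inSameBlock (tensor z (idN m)) a b ∧ Sum.inr a = x ∧ Sum.inr b = y))
      (Sum.inr (Sum.inr i)) (Sum.inr (Sum.inr j)) ↔
      q (Sum.inr (Fin.cast (Nat.zero_add m) i)) (Sum.inr (Fin.cast (Nat.zero_add m) j))
  constructor
  · intro h
    have hRS : ∀ u v, ((∃ a b, inSameBlock (tensor p q) a b ∧
          Sum.map id Sum.inl a = u ∧ Sum.map id Sum.inl b = v) ∨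
        (∃ a b, inSameBlock (tensor z (idN m)) a b ∧ Sum.inr a = u ∧ Sum.inr b = v)) →
        S2 (n := n) q u v := by
      rintro u v (⟨a, b, hab, rfl, rfl⟩ | ⟨a, b, hab, rfl, rfl⟩)
      · rcases a with a | ia
        · exact a.elim0
        rcases b with b | ib
        · exact b.elim0
        rw [inSameBlock_def, tensor_rel] at hab
        rcases symm_spec (n := n) (m := m) ia with ⟨h1, hs1⟩ | ⟨b1, hb1, hs1⟩ <;>
          rcases symm_spec (n := n) (m := m) ib with ⟨h2, hs2⟩ | ⟨b2, hb2, hs2⟩ <;>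
            simp only [Sum.map_inr, hs1, hs2] at hab <;>
              simp [Equiv.sumSumSumComm] at hab
        · exact Or.inr ⟨⟨⟨ia.val, h1⟩, by simp [col2, hs1]⟩, ⟨⟨ib.val, h2⟩, by simp [col2, hs2]⟩⟩
        · exact Or.inl ⟨b1, b2, by simp [col2, hs1], by simp [col2, hs2], hab⟩
      · rw [inSameBlock_def, tensor_rel] at hab
        rcases a with ia | ja <;> rcases b with ib | jb
        · -- middle-middle
          rcases symm_spec (n := n) (m := m) ia with ⟨h1, hs1⟩ | ⟨b1, hb1, hs1⟩ <;>
            rcases symm_spec (n := n) (m := m) ib with ⟨h2, hs2⟩ | ⟨b2, hb2, hs2⟩ <;>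
              simp only [Sum.map_inl, hs1, hs2] at hab <;>
                simp [Equiv.sumSumSumComm, idN, Setoid.ker_def] at hab
          · exact Or.inr ⟨⟨⟨ia.val, h1⟩, by simp [col2, hs1]⟩, ⟨⟨ib.val, h2⟩, by simp [col2, hs2]⟩⟩
          · refine Or.inl ⟨b1, b2, by simp [col2, hs1], by simp [col2, hs2], ?_⟩
            have : b1 = b2 := by ext; exact hab
            rw [this]
        · -- middle-bottom
          rcases symm_spec (n := 0) (m := m) jb with ⟨h2, hs2⟩ | ⟨b2, hb2, hs2⟩
          · exact (Nat.not_lt_zero _ h2).elim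
          rcases symm_spec (n := n) (m := m) ia with ⟨h1, hs1⟩ | ⟨b1, hb1, hs1⟩ <;>
            simp only [Sum.map_inl, Sum.map_inr, hs1, hs2] at hab <;>
              simp [Equiv.sumSumSumComm, idN, Setoid.ker_def] at hab
          refine Or.inl ⟨b1, Fin.cast (Nat.zero_add m) jb, by simp [col2, hs1],
            by simp [col2], ?_⟩
          have : b1 = Fin.cast (Nat.zero_add m) jb := by
            ext
            simp only [Fin.coe_cast]
            have hab' : (b1 : ℕ) = b2 := hab
            omega
          rw [this]
        · -- bottom-middle
          rcases symm_spec (n := 0) (m := m) ja with ⟨h1, hs1⟩ | ⟨b1, hb1, hs1⟩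
          · exact (Nat.not_lt_zero _ h1).elim
          rcases symm_spec (n := n) (m := m) ib with ⟨h2, hs2⟩ | ⟨b2, hb2, hs2⟩ <;>
            simp only [Sum.map_inl, Sum.map_inr, hs1, hs2] at hab <;>
              simp [Equiv.sumSumSumComm, idN, Setoid.ker_def] at hab
          refine Or.inl ⟨Fin.cast (Nat.zero_add m) ja, b2, by simp [col2],
            by simp [col2, hs2], ?_⟩
          have : (Fin.cast (Nat.zero_add m) ja) = b2 := by
            ext
            simp only [Fin.coe_cast]
            have hab' : (b1 : ℕ) = b2 := hab
            omega
          rw [this]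
        · -- bottom-bottom
          rcases symm_spec (n := 0) (m := m) ja with ⟨h1, hs1⟩ | ⟨b1, hb1, hs1⟩
          · exact (Nat.not_lt_zero _ h1).elim
          rcases symm_spec (n := 0) (m := m) jb with ⟨h2, hs2⟩ | ⟨b2, hb2, hs2⟩
          · exact (Nat.not_lt_zero _ h2).elim
          simp only [Sum.map_inr, hs1, hs2] at hab
          simp [Equiv.sumSumSumComm, idN, Setoid.ker_def] at hab
          refine Or.inl ⟨Fin.cast (Nat.zero_add m) ja, Fin.cast (Nat.zero_add m) jb,
            by simp [col2], by simp [col2], ?_⟩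
          have : (Fin.cast (Nat.zero_add m) ja) = Fin.cast (Nat.zero_add m) jb := by
            ext
            simp only [Fin.coe_cast]
            have hab' : (b1 : ℕ) = b2 := hab
            omega
          rw [this]
    have hS := ((S2_equiv (n := n) q).eqvGen_iff).mp (Relation.EqvGen.mono hRS _ _ h)
    rcases hS with ⟨a, b, h1, h2, h3⟩ | ⟨⟨a, h1⟩, -⟩
    · have ha : (Sum.inr (Fin.cast (Nat.zero_add m) i) : Fin n ⊕ Fin m) = Sum.inr a := h1
      have hb : (Sum.inr (Fin.cast (Nat.zero_add m) j) : Fin n ⊕ Fin m) = Sum.inr b := h2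
      cases Sum.inr.inj ha
      cases Sum.inr.inj hb
      exact h3
    · exact absurd h1 (by simp [col2])
  · intro hq
    have hsi : finSumFinEquiv.symm i = Sum.inr (Fin.cast (Nat.zero_add m) i) := by
      rw [Equiv.symm_apply_eq]
      show i = Fin.natAdd 0 (Fin.cast (Nat.zero_add m) i)
      ext
      show i.val = 0 + i.val
      omega
    have hsj : finSumFinEquiv.symm j = Sum.inr (Fin.cast (Nat.zero_add m) j) := by
      rw [Equiv.symm_apply_eq]
      show j = Fin.natAdd 0 (Fin.cast (Nat.zero_add m) j)
      ext
      show j.val = 0 + j.val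
      omega
    have step1 : (tensor z (idN m))
        (Sum.inl (Fin.natAdd n (Fin.cast (Nat.zero_add m) i))) (Sum.inr i) := by
      rw [tensor_rel]
      simp only [Sum.map_inl, Sum.map_inr, symm_natAdd, hsi]
      simp [Equiv.sumSumSumComm, idN, Setoid.ker_def]
      rfl
    have step2 : (tensor z (idN m))
        (Sum.inl (Fin.natAdd n (Fin.cast (Nat.zero_add m) j))) (Sum.inr j) := by
      rw [tensor_rel]
      simp only [Sum.map_inl, Sum.map_inr, symm_natAdd, hsj]
      simp [Equiv.sumSumSumComm, idN, Setoid.ker_def]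
      rfl
    have step3 : (tensor p q)
        (Sum.inr (Fin.natAdd n (Fin.cast (Nat.zero_add m) i)))
        (Sum.inr (Fin.natAdd n (Fin.cast (Nat.zero_add m) j))) := by
      rw [tensor_rel]
      simp only [Sum.map_inr, symm_natAdd]
      simp [Equiv.sumSumSumComm]
      exact hq
    refine Relation.EqvGen.trans _ _ _
      (Relation.EqvGen.symm _ _ (Relation.EqvGen.rel _ _ (Or.inr
        ⟨_, _, step1, rfl, rfl⟩)))
      (Relation.EqvGen.trans _ _ _
        (Relation.EqvGen.rel _ _ (Or.inl
          ⟨_, _, step3, rfl, rfl⟩))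
        (Relation.EqvGen.rel _ _ (Or.inr
          ⟨_, _, step2, rfl, rfl⟩)))

end EasyQG
namespace EasyQG

lemma rotRU_rotUR {k l : ℕ} (p : Partition (k + 1) l) : rotRU (rotUR p) = p := by
  apply Setoid.ext
  intro x y
  show p _ _ ↔ p x y
  have key : ∀ x : Fin (k + 1) ⊕ Fin l,
      (Sum.elim (fun i => Sum.inl i.castSucc)
        (fun j => Fin.lastCases (Sum.inl (Fin.last k)) (fun j' => Sum.inr j') j)
        (Sum.elim (fun i => Fin.lastCases (Sum.inr (Fin.last l)) (fun i' => Sum.inl i') i)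
          (fun j => Sum.inr j.castSucc) x) : Fin (k + 1) ⊕ Fin l) = x := by
    rintro (i | j)
    · induction i using Fin.lastCases with
      | last => simp
      | cast i => simp
    · simp
  rw [key x, key y]

/-- Every partition can be rotated into a one-line partition, keeping the
generated category. -/
lemma toRow : ∀ (k l : ℕ) (p : Partition k l), ∃ q : Partition 0 (k + l),
    ∀ C : PartitionCategory,
      ((⟨k, l, p⟩ : Σ k l : ℕ, Partition k l) ∈ C.mem ↔
        (⟨0, k + l, q⟩ : Σ k l : ℕ, Partition k l) ∈ C.mem) := by
  intro k
  induction k with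
  | zero =>
    intro l p
    exact ⟨pcast rfl (Nat.zero_add l).symm p, fun C => mem_cast_iff rfl (Nat.zero_add l).symm p⟩
  | succ k ih =>
    intro l p
    obtain ⟨q, hq⟩ := ih (l + 1) (rotUR p)
    refine ⟨pcast rfl (by omega) q, fun C => ?_⟩
    have h1 : (⟨k + 1, l, p⟩ : Σ k l : ℕ, Partition k l) ∈ C.mem ↔
        (⟨k, l + 1, rotUR p⟩ : Σ k l : ℕ, Partition k l) ∈ C.mem := by
      constructor
      · exact C.rotUR_mem
      · intro h
        have := C.rotRU_mem h
        rwa [rotRU_rotUR] at this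
    rw [h1, hq C, mem_cast_iff rfl (show k + (l + 1) = (k + 1) + l by omega) q]

end EasyQG
namespace EasyQG

lemma extract_left (C : PartitionCategory) {n m : ℕ} {p : Partition 0 n} {q : Partition 0 m}
    (h : (⟨0, n + m, tensor p q⟩ : Σ k l : ℕ, Partition k l) ∈ C.mem)
    {z : Partition m 0} (hz : (⟨m, 0, z⟩ : Σ k l : ℕ, Partition k l) ∈ C.mem) :
    (⟨0, n, p⟩ : Σ k l : ℕ, Partition k l) ∈ C.mem := by
  have h2 := C.comp_mem h (C.tensor_mem (idN_mem C n) hz)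
  rwa [E1] at h2

lemma extract_right (C : PartitionCategory) {n m : ℕ} {p : Partition 0 n} {q : Partition 0 m}
    (h : (⟨0, n + m, tensor p q⟩ : Σ k l : ℕ, Partition k l) ∈ C.mem)
    {z : Partition n 0} (hz : (⟨n, 0, z⟩ : Σ k l : ℕ, Partition k l) ∈ C.mem) :
    (⟨0, m, q⟩ : Σ k l : ℕ, Partition k l) ∈ C.mem := by
  have h2 := C.comp_mem h (C.tensor_mem hz (idN_mem C m))
  rw [E2 p q z] at h2
  exact (mem_cast_iff rfl (Nat.zero_add m).symm q).mpr h2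

lemma even_mem (C : PartitionCategory) (N : ℕ) (hN : Even N) :
    ∃ z : Partition N 0, (⟨N, 0, z⟩ : Σ k l : ℕ, Partition k l) ∈ C.mem := by
  have aux : ∀ j, ∃ z : Partition (2 * j) 0,
      (⟨2 * j, 0, z⟩ : Σ k l : ℕ, Partition k l) ∈ C.mem := by
    intro j
    induction j with
    | zero => exact ⟨idN 0, empty_mem C (idN 0)⟩
    | succ j ih =>
      obtain ⟨z, hz⟩ := ih
      have h2 := C.tensor_mem (C.involution_mem (pair_mem C)) hz
      exact ⟨pcast (show 2 + 2 * j = 2 * (j + 1) by omega) rfl _,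
        (mem_cast_iff (show 2 + 2 * j = 2 * (j + 1) by omega) rfl _).mp h2⟩
  obtain ⟨r, hr⟩ := hN
  rw [show N = 2 * r by omega]
  exact aux r

lemma single_killers (C : PartitionCategory) {u : Partition 0 1}
    (hu : (⟨0, 1, u⟩ : Σ k l : ℕ, Partition k l) ∈ C.mem) (j : ℕ) :
    ∃ z : Partition j 0, (⟨j, 0, z⟩ : Σ k l : ℕ, Partition k l) ∈ C.mem := by
  induction j with
  | zero => exact ⟨idN 0, empty_mem C (idN 0)⟩
  | succ j ih =>
    obtain ⟨z, hz⟩ := ih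
    have h2 := C.tensor_mem (C.involution_mem hu) hz
    exact ⟨pcast (show 1 + j = j + 1 by omega) rfl _,
      (mem_cast_iff (show 1 + j = j + 1 by omega) rfl _).mp h2⟩

lemma odd_single (C : PartitionCategory) {N : ℕ} {w : Partition 0 N}
    (h : (⟨0, N, w⟩ : Σ k l : ℕ, Partition k l) ∈ C.mem) (hN : Odd N) :
    ∃ u : Partition 0 1, (⟨0, 1, u⟩ : Σ k l : ℕ, Partition k l) ∈ C.mem := by
  obtain ⟨r, hr⟩ := hN
  subst hr
  obtain ⟨z, hz⟩ := even_mem C (2 * r) ⟨r, by omega⟩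
  have h1 : (⟨1, 1, idN 1⟩ : Σ k l : ℕ, Partition k l) ∈ C.mem := by
    rw [idN_one]; exact C.id_mem
  have ht := C.tensor_mem hz h1
  exact ⟨comp w (tensor z (idN 1)), C.comp_mem h ht⟩

end EasyQG
namespace EasyQG

lemma generated_mono' {S T : Set (Σ k l : ℕ, Partition k l)} (h : S ⊆ T) :
    generated S ⊆ generated T :=
  generated_minimal (C := genCat T) (h.trans (subset_generated T))

lemma two_gen (a b : Σ k l : ℕ, Partition k l) :
    ∃ c : Σ k l : ℕ, Partition k l, generated {a, b} = generated {c} := by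
  obtain ⟨ka, la, pa⟩ := a
  obtain ⟨kb, lb, pb⟩ := b
  obtain ⟨qa, ha⟩ := toRow ka la pa
  obtain ⟨qb, hb⟩ := toRow kb lb pb
  set Cab := genCat {(⟨ka, la, pa⟩ : Σ k l : ℕ, Partition k l), ⟨kb, lb, pb⟩} with hCab
  have memA : (⟨ka, la, pa⟩ : Σ k l : ℕ, Partition k l) ∈ Cab.mem :=
    subset_generated _ (Set.mem_insert _ _)
  have memB : (⟨kb, lb, pb⟩ : Σ k l : ℕ, Partition k l) ∈ Cab.mem :=
    subset_generated _ (Set.mem_insert_iff.mpr (Or.inr rfl))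
  have hqa : (⟨0, (ka + la), qa⟩ : Σ k l : ℕ, Partition k l) ∈ Cab.mem := (ha Cab).mp memA
  have hqb : (⟨0, (kb + lb), qb⟩ : Σ k l : ℕ, Partition k l) ∈ Cab.mem := (hb Cab).mp memB
  by_cases hpar : Even (ka + la) ∧ Even (kb + lb)
  · -- both even
    refine ⟨⟨0, (ka + la) + (kb + lb), tensor qa qb⟩, generated_antisymm ?_ ?_⟩
    · rintro x (rfl | rfl)
      all_goals
        intro Cc hCc
        have hc : (⟨0, (ka + la) + (kb + lb), tensor qa qb⟩ : Σ k l : ℕ, Partition k l) ∈ Cc.mem :=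
          hCc rfl
      · obtain ⟨z, hz⟩ := even_mem Cc (kb + lb) hpar.2
        exact (ha Cc).mpr (extract_left Cc hc hz)
      · obtain ⟨z, hz⟩ := even_mem Cc (ka + la) hpar.1
        exact (hb Cc).mpr (extract_right Cc hc hz)
    · rintro x rfl
      exact Cab.tensor_mem hqa hqb
  · -- at least one odd
    have hodd : Odd (ka + la) ∨ Odd (kb + lb) := by
      rcases Nat.even_or_odd (ka + la) with h1 | h1
      · rcases Nat.even_or_odd (kb + lb) with h2 | h2
        · exact absurd ⟨h1, h2⟩ hpar
        · exact Or.inr h2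
      · exact Or.inl h1
    obtain ⟨u, hu⟩ : ∃ u : Partition 0 1,
        (⟨0, 1, u⟩ : Σ k l : ℕ, Partition k l) ∈ Cab.mem := by
      rcases hodd with h | h
      · exact odd_single Cab hqa h
      · exact odd_single Cab hqb h
    have padA : ∃ (Ma : ℕ) (A : Partition 0 Ma), Even Ma ∧
        ((⟨0, Ma, A⟩ : Σ k l : ℕ, Partition k l) ∈ Cab.mem) ∧
        (∀ D : PartitionCategory, (⟨0, Ma, A⟩ : Σ k l : ℕ, Partition k l) ∈ D.mem →
          (⟨0, 1, u⟩ : Σ k l : ℕ, Partition k l) ∈ D.mem →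
          (⟨0, (ka + la), qa⟩ : Σ k l : ℕ, Partition k l) ∈ D.mem) := by
      rcases Nat.even_or_odd (ka + la) with hE | hO
      · exact ⟨(ka + la), qa, hE, hqa, fun D h _ => h⟩
      · refine ⟨(ka + la) + 1, tensor qa u, by rcases hO with ⟨r, hr⟩; exact ⟨r + 1, by omega⟩,
          Cab.tensor_mem hqa hu, ?_⟩
        intro D h hD
        exact extract_left D h (D.involution_mem hD)
    have padB : ∃ (Mb : ℕ) (B : Partition 0 Mb), Even Mb ∧
        ((⟨0, Mb, B⟩ : Σ k l : ℕ, Partition k l) ∈ Cab.mem) ∧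
        (∀ D : PartitionCategory, (⟨0, Mb, B⟩ : Σ k l : ℕ, Partition k l) ∈ D.mem →
          (⟨0, 1, u⟩ : Σ k l : ℕ, Partition k l) ∈ D.mem →
          (⟨0, (kb + lb), qb⟩ : Σ k l : ℕ, Partition k l) ∈ D.mem) := by
      rcases Nat.even_or_odd (kb + lb) with hE | hO
      · exact ⟨(kb + lb), qb, hE, hqb, fun D h _ => h⟩
      · refine ⟨(kb + lb) + 1, tensor qb u, by rcases hO with ⟨r, hr⟩; exact ⟨r + 1, by omega⟩,
          Cab.tensor_mem hqb hu, ?_⟩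
        intro D h hD
        exact extract_left D h (D.involution_mem hD)
    obtain ⟨Ma, A, hEa, hA, htransA⟩ := padA
    obtain ⟨Mb, B, hEb, hB, htransB⟩ := padB
    refine ⟨⟨0, (Ma + Mb) + 1, tensor (tensor A B) u⟩, generated_antisymm ?_ ?_⟩
    · have main : ∀ Cc : PartitionCategory,
          (⟨0, (Ma + Mb) + 1, tensor (tensor A B) u⟩ : Σ k l : ℕ, Partition k l) ∈ Cc.mem →
          (⟨0, (ka + la), qa⟩ : Σ k l : ℕ, Partition k l) ∈ Cc.mem ∧
          (⟨0, (kb + lb), qb⟩ : Σ k l : ℕ, Partition k l) ∈ Cc.mem := by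
        intro Cc hc
        obtain ⟨zE, hzE⟩ := even_mem Cc (Ma + Mb) (hEa.add hEb)
        have hu' : (⟨0, 1, u⟩ : Σ k l : ℕ, Partition k l) ∈ Cc.mem :=
          extract_right Cc hc hzE
        obtain ⟨z1, hz1⟩ := single_killers Cc hu' 1
        have hAB : (⟨0, Ma + Mb, tensor A B⟩ : Σ k l : ℕ, Partition k l) ∈ Cc.mem :=
          extract_left Cc hc hz1
        obtain ⟨zMb, hzMb⟩ := single_killers Cc hu' Mb
        obtain ⟨zMa, hzMa⟩ := single_killers Cc hu' Ma
        have hA' : (⟨0, Ma, A⟩ : Σ k l : ℕ, Partition k l) ∈ Cc.mem :=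
          extract_left Cc hAB hzMb
        have hB' : (⟨0, Mb, B⟩ : Σ k l : ℕ, Partition k l) ∈ Cc.mem :=
          extract_right Cc hAB hzMa
        exact ⟨htransA Cc hA' hu', htransB Cc hB' hu'⟩
      rintro x (rfl | rfl) <;> intro Cc hCc
      · exact (ha Cc).mpr (main Cc (hCc rfl)).1
      · exact (hb Cc).mpr (main Cc (hCc rfl)).2
    · rintro x rfl
      exact Cab.tensor_mem (Cab.tensor_mem hA hB) hu

lemma list_single (L : List (Σ k l : ℕ, Partition k l)) :
    ∃ p : Σ k l : ℕ, Partition k l, generated {x | x ∈ L} = generated {p} := by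
  induction L with
  | nil =>
    refine ⟨⟨1, 1, idPartition⟩, generated_antisymm ?_ ?_⟩
    · intro x hx
      simp only [Set.mem_setOf_eq, List.not_mem_nil] at hx
    · rintro x rfl
      intro C _
      exact C.id_mem
  | cons a L ih =>
    obtain ⟨p, hp⟩ := ih
    obtain ⟨c, hc⟩ := two_gen a p
    refine ⟨c, ?_⟩
    have h1 : {x | x ∈ a :: L} = insert a {x | x ∈ L} := Set.ext fun x => List.mem_cons
    have h2 : generated (insert a {x | x ∈ L}) = generated {a, p} := by
      apply generated_antisymm
      · intro x hx
        rcases Set.mem_insert_iff.mp hx with rfl | hx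
        · exact subset_generated _ (Set.mem_insert _ _)
        · have : x ∈ generated {x | x ∈ L} := subset_generated _ hx
          rw [hp] at this
          refine generated_mono' ?_ this
          intro y hy
          rw [Set.mem_singleton_iff] at hy
          subst hy
          exact Set.mem_insert_iff.mpr (Or.inr rfl)
      · rintro x (rfl | rfl)
        · exact subset_generated _ (Set.mem_insert _ _)
        · have : x ∈ generated {x} := subset_generated _ rfl
          rw [← hp] at this
          exact generated_mono' (fun y hy => Set.mem_insert_iff.mpr (Or.inr hy)) this
    rw [h1, h2, hc]

end EasyQG

namespace EasyQG

theorem statement16 (C : PartitionCategory) :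
    (∃ L : List (Σ k l : ℕ, Partition k l), C.mem = generated {x | x ∈ L}) ↔
      (∃ p : Σ k l : ℕ, Partition k l, C.mem = generated {p}) := by
  constructor
  · rintro ⟨L, hL⟩
    obtain ⟨p, hp⟩ := list_single L
    exact ⟨p, hL.trans hp⟩
  · rintro ⟨p, hp⟩
    refine ⟨[p], ?_⟩
    have hset : {x : Σ k l : ℕ, Partition k l | x ∈ [p]} = {p} := by
      ext x
      simp
    rw [hp, hset]

end EasyQG
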